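/- arXiv:2412.16834 — 3 statements merged into one kernel-verified Lean document; each statement's English description precedes it below -/
import Mathlib

section
/- Let N ≥ 1, T ≥ 1, let ℓ_{i,t} ∈ [0,1] for i ∈ {1,...,N}, t ∈ {1,...,T}, and let 0 < α < 1/2. Define w_i^1 = 1 and w_i^{t+1} = w_i^t·(1 - α·ℓ_{i,t}). Then for every index k: Σ_{t=1}^T (Σ_i w_i^t·ℓ_{i,t} / Σ_i w_i^t) - Σ_{t=1}^T ℓ_{k,t} ≤ (ln N)/α + (9/8)·α·T. -/
open Finset

private lemma mw_log_one_sub_ge (x : ℝ) (h0 : 0 ≤ x) (h2 : x ≤ 1/2) :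
    -x - x^2 ≤ Real.log (1 - x) := by
  have h1 : (0:ℝ) < 1 - x := by linarith
  rw [Real.le_log_iff_exp_le h1]
  have hs : (0:ℝ) ≤ x + x^2 := by positivity
  have hq : 1 + (x + x^2) + (x + x^2)^2/2 ≤ Real.exp (x + x^2) :=
    Real.quadratic_le_exp_of_nonneg hs
  have key : (1:ℝ) ≤ (1 - x) * Real.exp (x + x^2) := by nlinarith
  have : -x - x^2 = -(x + x^2) := by ring
  rw [this, Real.exp_neg]
  rw [inv_eq_one_div, div_le_iff₀ (Real.exp_pos _)]
  linarith [key]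

theorem mw_regret_bound (N T : ℕ) (hN : 1 ≤ N) (hT : 1 ≤ T)
    (α : ℝ) (hα : 0 < α) (hα2 : α < 1/2)
    (ℓ : Fin N → ℕ → ℝ) (hℓ : ∀ i, ∀ t ∈ Finset.Icc 1 T, ℓ i t ∈ Set.Icc (0:ℝ) 1)
    (w : Fin N → ℕ → ℝ) (hw1 : ∀ i, w i 1 = 1)
    (hrec : ∀ i, ∀ t ∈ Finset.Icc 1 T, w i (t + 1) = w i t * (1 - α * ℓ i t))
    (k : Fin N) :
    ∑ t ∈ Finset.Icc 1 T, (∑ i, w i t * ℓ i t) / (∑ i, w i t) -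
      ∑ t ∈ Finset.Icc 1 T, ℓ k t ≤
      Real.log N / α + (9/8) * α * T := by
  -- positivity of weights
  have hwpos : ∀ t, 1 ≤ t → t ≤ T + 1 → ∀ i, 0 < w i t := by
    intro t ht1 ht2
    induction t with
    | zero => omega
    | succ n ih =>
      intro i
      rcases Nat.eq_or_lt_of_le ht1 with h | h
      · rw [← h]; simp [hw1]
      · have hn1 : 1 ≤ n := by omega
        have hnT : n ≤ T := by omega
        have hmem : n ∈ Finset.Icc 1 T := by simp [hn1, hnT]
        rw [hrec i n hmem]
        have hℓn := hℓ i n hmem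
        have h1 : 0 < 1 - α * ℓ i n := by
          have := hℓn.2; nlinarith
        exact mul_pos (ih hn1 (by omega) i) h1
  set W : ℕ → ℝ := fun t => ∑ i, w i t with hW
  have hWpos : ∀ t, 1 ≤ t → t ≤ T + 1 → 0 < W t := fun t h1 h2 =>
    Finset.sum_pos (fun i _ => hwpos t h1 h2 i)
      (Finset.univ_nonempty_iff.2 ⟨⟨0, by omega⟩⟩)
  set F : ℕ → ℝ := fun t => (∑ i, w i t * ℓ i t) / W t with hF
  -- F t ∈ [0,1] for t ∈ [1,T]
  have hFmem : ∀ t, 1 ≤ t → t ≤ T → 0 ≤ F t ∧ F t ≤ 1 := by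
    intro t h1 h2
    have hWt := hWpos t h1 (by omega)
    have hmem : t ∈ Finset.Icc 1 T := by simp [h1, h2]
    have hnum0 : 0 ≤ ∑ i, w i t * ℓ i t :=
      Finset.sum_nonneg fun i _ =>
        mul_nonneg (hwpos t h1 (by omega) i).le (hℓ i t hmem).1
    have hnum1 : ∑ i, w i t * ℓ i t ≤ W t := by
      apply Finset.sum_le_sum
      intro i _
      have := (hℓ i t hmem).2
      nlinarith [hwpos t h1 (by omega) i]
    constructor
    · exact div_nonneg hnum0 hWt.le
    · rw [div_le_one hWt]; exact hnum1
  -- Upper bound on log W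
  have hU : ∀ n, n ≤ T → Real.log (W (n + 1)) ≤
      Real.log N - α * ∑ t ∈ Finset.Icc 1 n, F t := by
    intro n hn
    induction n with
    | zero =>
      simp only [Finset.Icc_self, zero_add]
      have : W 1 = N := by
        simp only [hW, hw1, Finset.sum_const, Finset.card_univ, Fintype.card_fin,
          nsmul_eq_mul, mul_one]
      rw [this]
      simp
    | succ n ih =>
      have hn' : n ≤ T := by omega
      have hmem : n + 1 ∈ Finset.Icc 1 T := by simp; omega
      have hWn1 := hWpos (n + 1) (by omega) (by omega)
      have hFn := hFmem (n + 1) (by omega) (by omega)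
      have hWrec : W (n + 2) = W (n + 1) * (1 - α * F (n + 1)) := by
        have : W (n + 2) = ∑ i, w i (n + 1) * (1 - α * ℓ i (n + 1)) := by
          apply Finset.sum_congr rfl
          intro i _
          exact hrec i (n + 1) hmem
        rw [this]
        have hexp : ∑ i, w i (n + 1) * (1 - α * ℓ i (n + 1)) =
            W (n + 1) - α * ∑ i, w i (n + 1) * ℓ i (n + 1) := by
          rw [Finset.mul_sum, ← Finset.sum_sub_distrib]
          apply Finset.sum_congr rfl
          intro i _; ring
        rw [hexp, hF]
        field_simp
      have hpos2 : 0 < 1 - α * F (n + 1) := by nlinarith [hFn.2]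
      have hlog2 : Real.log (1 - α * F (n + 1)) ≤ -(α * F (n + 1)) := by
        have := Real.log_le_sub_one_of_pos hpos2
        linarith
      rw [show n + 1 + 1 = n + 2 from rfl, hWrec,
        Real.log_mul (ne_of_gt hWn1) (ne_of_gt hpos2),
        Finset.sum_Icc_succ_top (by omega : 1 ≤ n + 1)]
      have := ih hn'
      nlinarith
  -- Lower bound on log (w k)
  have hL : ∀ n, n ≤ T →
      -α * ∑ t ∈ Finset.Icc 1 n, ℓ k t - α^2 * n ≤ Real.log (w k (n + 1)) := by
    intro n hn
    induction n with
    | zero => simp [hw1]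
    | succ n ih =>
      have hn' : n ≤ T := by omega
      have hmem : n + 1 ∈ Finset.Icc 1 T := by simp; omega
      have hℓn := hℓ k (n + 1) hmem
      have hx0 : 0 ≤ α * ℓ k (n + 1) := mul_nonneg hα.le hℓn.1
      have hx2 : α * ℓ k (n + 1) ≤ 1/2 := by nlinarith [hℓn.2]
      have hlog := mw_log_one_sub_ge (α * ℓ k (n + 1)) hx0 hx2
      have hsq : (α * ℓ k (n + 1))^2 ≤ α^2 := by
        have hl2 : ℓ k (n + 1)^2 ≤ 1 := by nlinarith [hℓn.1, hℓn.2]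
        nlinarith [sq_nonneg α]
      have hwk := hwpos (n + 1) (by omega) (by omega) k
      have hpos2 : 0 < 1 - α * ℓ k (n + 1) := by nlinarith [hℓn.2]
      rw [show n + 1 + 1 = n + 2 from rfl, hrec k (n + 1) hmem,
        Real.log_mul (ne_of_gt hwk) (ne_of_gt hpos2),
        Finset.sum_Icc_succ_top (by omega : 1 ≤ n + 1)]
      have := ih hn'
      push_cast
      nlinarith
  -- combine
  have hwkW : Real.log (w k (T + 1)) ≤ Real.log (W (T + 1)) := by
    apply Real.log_le_log (hwpos (T + 1) (by omega) (by omega) k)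
    have : w k (T + 1) ≤ W (T + 1) := by
      apply Finset.single_le_sum (f := fun i => w i (T + 1))
        (fun i _ => (hwpos (T + 1) (by omega) (by omega) i).le) (Finset.mem_univ k)
    exact this
  have h1 := hL T le_rfl
  have h2 := hU T le_rfl
  have hchain : -α * ∑ t ∈ Finset.Icc 1 T, ℓ k t - α^2 * T ≤
      Real.log N - α * ∑ t ∈ Finset.Icc 1 T, F t := by
    calc _ ≤ Real.log (w k (T + 1)) := h1
    _ ≤ Real.log (W (T + 1)) := hwkW
    _ ≤ _ := h2
  have hgoal : ∑ t ∈ Finset.Icc 1 T, F t - ∑ t ∈ Finset.Icc 1 T, ℓ k t ≤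
      Real.log N / α + (9/8) * α * T := by
    have hT1 : (1:ℝ) ≤ T := by exact_mod_cast hT
    rw [← sub_nonneg]
    have : Real.log N / α + 9/8 * α * T - (∑ t ∈ Finset.Icc 1 T, F t -
        ∑ t ∈ Finset.Icc 1 T, ℓ k t) =
        (Real.log N + 9/8 * α^2 * T - α * (∑ t ∈ Finset.Icc 1 T, F t -
          ∑ t ∈ Finset.Icc 1 T, ℓ k t)) / α := by
      field_simp
    rw [this]
    apply div_nonneg _ hα.le
    nlinarith
  exact hgoal
end

section
/- Let N ≥ 2, T ≥ 1, let ℓ_{i,t} ∈ [0,1] for i ∈ {1,...,N}, t ∈ {1,...,T}, and suppose (2/3)·√(2·ln N / T) < 1/2. Define w_i^1 = 1 and w_i^{t+1} = w_i^t·(1 - α·ℓ_{i,t}) with α = (2/3)·√(2·ln N / T). Then for every index k: Σ_{t=1}^T (Σ_i w_i^t·ℓ_{i,t} / Σ_i w_i^t) - Σ_{t=1}^T ℓ_{k,t} ≤ 3·√(T·ln N / 2). -/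
/-!
Every expert's weight is at most the total weight. Taking logarithms, the expert's weight after
`T` rounds is `∏ (1 - α ℓₖₜ) ≥ exp (-α Lₖ - α² T)` because `log (1 - x) ≥ -x - x²` on `[0, 1/2]`,
while the total weight is `N ∏ (1 - α pₜ) ≤ N exp (-α P)` because `log (1 - x) ≤ -x`, where `pₜ`
is the loss of the weighted mixture. Hence `P - Lₖ ≤ (log N) / α + α T`, and the step size
`α = (2/3) √(2 log N / T)` turns this into `(17/12) √(2 T log N) ≤ 3 √(T log N / 2)`.
-/

open Finset Real

lemma neg_sub_sq_le_log_one_sub {x : ℝ} (h₀ : 0 ≤ x) (h : x ≤ 1 / 2) :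
    -x - x ^ 2 ≤ log (1 - x) := by
  let F (y : ℝ) : ℝ := log (1 - y) + y + y ^ 2
  have hF : ∀ y ∈ Set.Icc (0 : ℝ) (1 / 2), HasDerivAt F (y * (1 - 2 * y) / (1 - y)) y := by
    intro y hy
    have hy1 : 1 - y ≠ 0 := by linarith [hy.2]
    refine (((((hasDerivAt_id' y).const_sub 1).log hy1).fun_add (hasDerivAt_id' y)).fun_add
      (hasDerivAt_pow 2 y)).congr_deriv ?_
    field_simp
    ring
  suffices MonotoneOn F (Set.Icc 0 (1 / 2)) by
    have := this ⟨le_rfl, by norm_num⟩ ⟨h₀, h⟩ h₀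
    norm_num [F] at this
    linarith
  refine monotoneOn_of_hasDerivWithinAt_nonneg (convex_Icc 0 (1 / 2))
    (fun y hy ↦ (hF y hy).continuousAt.continuousWithinAt)
    (fun y hy ↦ (hF y (interior_subset hy)).hasDerivWithinAt) fun y hy ↦ ?_
  rw [interior_Icc] at hy
  exact div_nonneg (mul_nonneg hy.1.le (by linarith [hy.2])) (by linarith [hy.2])

lemma one_sub_mul_pos {α x : ℝ} (hα₀ : 0 ≤ α) (hα : α < 1) (hx : x ≤ 1) : 0 < 1 - α * x := by
  nlinarith

lemma eq_mul_prod_Icc_of_succ_eq_mul {M : Type*} [CommMonoid M] {f g : ℕ → M} {n : ℕ}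
    (h : ∀ t ∈ Icc 1 n, f (t + 1) = f t * g t) : f (n + 1) = f 1 * ∏ t ∈ Icc 1 n, g t := by
  induction n with
  | zero => simp
  | succ n ih =>
    rw [prod_Icc_succ_top (by omega), ← mul_assoc,
      ← ih fun t ht ↦ h t (Icc_subset_Icc_right (by omega) ht), h (n + 1) (by simp)]

lemma pos_of_succ_eq_mul {R : Type*} [CommSemiring R] [PartialOrder R] [IsStrictOrderedRing R]
    {f g : ℕ → R} {n : ℕ} (h₁ : 0 < f 1) (hg : ∀ t ∈ Icc 1 n, 0 < g t)
    (h : ∀ t ∈ Icc 1 n, f (t + 1) = f t * g t) {t : ℕ} (ht : t ∈ Icc 1 (n + 1)) : 0 < f t := by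
  obtain ⟨m, rfl⟩ : ∃ m, t = m + 1 := ⟨t - 1, by grind⟩
  have hsub : Icc 1 m ⊆ Icc 1 n := Icc_subset_Icc_right (by grind)
  rw [eq_mul_prod_Icc_of_succ_eq_mul fun s hs ↦ h s (hsub hs)]
  exact mul_pos h₁ (prod_pos fun s hs ↦ hg s (hsub hs))

section MultiplicativeWeights

variable {α : ℝ} {T : ℕ}

lemma weight_pos {ℓ w : ℕ → ℝ} (hα₀ : 0 ≤ α) (hα : α < 1) (hℓ : ∀ t ∈ Icc 1 T, ℓ t ≤ 1)
    (hw₁ : 0 < w 1) (hrec : ∀ t ∈ Icc 1 T, w (t + 1) = w t * (1 - α * ℓ t)) {t : ℕ}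
    (ht : t ∈ Icc 1 (T + 1)) : 0 < w t :=
  pos_of_succ_eq_mul hw₁ (fun s hs ↦ one_sub_mul_pos hα₀ hα (hℓ s hs)) hrec ht

lemma le_log_weight {ℓ w : ℕ → ℝ} (hα₀ : 0 ≤ α) (hα : α ≤ 1 / 2)
    (hℓ : ∀ t ∈ Icc 1 T, ℓ t ∈ Set.Icc (0 : ℝ) 1) (hw₁ : w 1 = 1)
    (hrec : ∀ t ∈ Icc 1 T, w (t + 1) = w t * (1 - α * ℓ t)) :
    -(α * ∑ t ∈ Icc 1 T, ℓ t) - α ^ 2 * T ≤ log (w (T + 1)) := by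
  rw [eq_mul_prod_Icc_of_succ_eq_mul hrec, hw₁, one_mul,
    log_prod fun t ht ↦ (one_sub_mul_pos hα₀ (by linarith) (hℓ t ht).2).ne']
  calc -(α * ∑ t ∈ Icc 1 T, ℓ t) - α ^ 2 * T = ∑ t ∈ Icc 1 T, (-(α * ℓ t) - α ^ 2) := by
        simp [sum_sub_distrib, mul_sum, mul_comm]
    _ ≤ ∑ t ∈ Icc 1 T, log (1 - α * ℓ t) := sum_le_sum fun t ht ↦ by
        obtain ⟨hℓ₀, hℓ₁⟩ := hℓ t ht
        have hsq : (α * ℓ t) ^ 2 ≤ α ^ 2 :=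
          pow_le_pow_left₀ (mul_nonneg hα₀ hℓ₀) (mul_le_of_le_one_right hα₀ hℓ₁) 2
        linarith [neg_sub_sq_le_log_one_sub (mul_nonneg hα₀ hℓ₀) (by nlinarith)]

variable {ι : Type*} [Fintype ι]

noncomputable def mixtureLoss (w ℓ : ι → ℕ → ℝ) (t : ℕ) : ℝ := (∑ i, w i t * ℓ i t) / ∑ i, w i t

lemma mixtureLoss_mem_Icc {w ℓ : ι → ℕ → ℝ} {t : ℕ} (hw : ∀ i, 0 ≤ w i t)
    (hℓ : ∀ i, ℓ i t ∈ Set.Icc (0 : ℝ) 1) : mixtureLoss w ℓ t ∈ Set.Icc 0 1 :=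
  ⟨div_nonneg (sum_nonneg fun i _ ↦ mul_nonneg (hw i) (hℓ i).1) (sum_nonneg fun i _ ↦ hw i),
    div_le_one_of_le₀ (sum_le_sum fun i _ ↦ mul_le_of_le_one_right (hw i) (hℓ i).2)
      (sum_nonneg fun i _ ↦ hw i)⟩

lemma sum_mul_one_sub_mul {w ℓ : ι → ℕ → ℝ} {t : ℕ} (α : ℝ) (hW : ∑ i, w i t ≠ 0) :
    ∑ i, w i t * (1 - α * ℓ i t) = (∑ i, w i t) * (1 - α * mixtureLoss w ℓ t) := by
  rw [mixtureLoss, mul_sub, mul_one, mul_left_comm, mul_div_cancel₀ _ hW, mul_sum,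
    ← sum_sub_distrib]
  exact sum_congr rfl fun i _ ↦ by ring

lemma log_sum_weights_le [Nonempty ι] {ℓ w : ι → ℕ → ℝ} (hα₀ : 0 ≤ α) (hα : α < 1)
    (hℓ : ∀ i, ∀ t ∈ Icc 1 T, ℓ i t ∈ Set.Icc (0 : ℝ) 1) (hw₁ : ∀ i, w i 1 = 1)
    (hrec : ∀ i, ∀ t ∈ Icc 1 T, w i (t + 1) = w i t * (1 - α * ℓ i t)) :
    log (∑ i, w i (T + 1)) ≤ log (Fintype.card ι) - α * ∑ t ∈ Icc 1 T, mixtureLoss w ℓ t := by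
  have hw : ∀ i, ∀ t ∈ Icc 1 T, 0 < w i t := fun i _ ht ↦
    weight_pos hα₀ hα (fun t ht ↦ (hℓ i t ht).2) (by simp [hw₁]) (hrec i)
      (Icc_subset_Icc_right (Nat.le_succ T) ht)
  have hfac : ∀ t ∈ Icc 1 T, 0 < 1 - α * mixtureLoss w ℓ t := fun t ht ↦
    one_sub_mul_pos hα₀ hα
      (mixtureLoss_mem_Icc (fun i ↦ (hw i t ht).le) (fun i ↦ hℓ i t ht)).2
  have hW : ∀ t ∈ Icc 1 T,
      ∑ i, w i (t + 1) = (∑ i, w i t) * (1 - α * mixtureLoss w ℓ t) := fun t ht ↦ by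
    rw [← sum_mul_one_sub_mul α (sum_pos (fun i _ ↦ hw i t ht) univ_nonempty).ne']
    exact sum_congr rfl fun i _ ↦ hrec i t ht
  rw [eq_mul_prod_Icc_of_succ_eq_mul (f := fun t ↦ ∑ i, w i t) hW,
    log_mul (by simp [hw₁]) (prod_pos hfac).ne', log_prod fun t ht ↦ (hfac t ht).ne', mul_sum,
    sub_eq_add_neg, ← sum_neg_distrib]
  simp only [hw₁, sum_const, card_univ, nsmul_eq_mul, mul_one]
  gcongr with t ht
  linarith [log_le_sub_one_of_pos (hfac t ht)]

theorem regret_le_log_card_div_add {ℓ w : ι → ℕ → ℝ} (hα₀ : 0 < α) (hα : α ≤ 1 / 2)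
    (hℓ : ∀ i, ∀ t ∈ Icc 1 T, ℓ i t ∈ Set.Icc (0 : ℝ) 1) (hw₁ : ∀ i, w i 1 = 1)
    (hrec : ∀ i, ∀ t ∈ Icc 1 T, w i (t + 1) = w i t * (1 - α * ℓ i t)) (k : ι) :
    ∑ t ∈ Icc 1 T, mixtureLoss w ℓ t - ∑ t ∈ Icc 1 T, ℓ k t ≤
      log (Fintype.card ι) / α + α * T := by
  have : Nonempty ι := ⟨k⟩
  have hw : ∀ i, 0 < w i (T + 1) := fun i ↦ weight_pos hα₀.le (by linarith)
    (fun t ht ↦ (hℓ i t ht).2) (by simp [hw₁]) (hrec i) (right_mem_Icc.2 (by omega))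
  have hk := le_log_weight hα₀.le hα (hℓ k) (hw₁ k) (hrec k)
  have hW := log_sum_weights_le hα₀.le (by linarith) hℓ hw₁ hrec
  have hkW : log (w k (T + 1)) ≤ log (∑ i, w i (T + 1)) :=
    log_le_log (hw k) (single_le_sum (fun i _ ↦ (hw i).le) (mem_univ k))
  rw [div_add' _ _ _ hα₀.ne', le_div_iff₀ hα₀]
  linarith

end MultiplicativeWeights

lemma div_add_mul_le_of_step_eq {a T α : ℝ} (ha : 0 < a) (hT : 0 < T)
    (hα : α = 2 / 3 * √(2 * a / T)) : a / α + α * T ≤ 3 * √(T * a / 2) := by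
  set s := √(2 * a / T)
  have hs : 0 < s := sqrt_pos.2 (by positivity)
  have ha : a = T * s ^ 2 / 2 := by
    rw [sq_sqrt (by positivity)]
    field_simp
  have hsqrt : √(T * a / 2) = T / 2 * s := by
    rw [ha, show T * (T * s ^ 2 / 2) / 2 = (T / 2 * s) ^ 2 by ring]
    exact sqrt_sq (by positivity)
  rw [hsqrt, hα, ha]
  field_simp
  nlinarith [mul_pos hT hs]

theorem mw_sublinear_regret (N T : ℕ) (hN : 2 ≤ N) (hT : 1 ≤ T)
    (α : ℝ) (hαdef : α = (2/3) * Real.sqrt (2 * Real.log N / T)) (hα2 : α < 1/2)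
    (ℓ : Fin N → ℕ → ℝ) (hℓ : ∀ i, ∀ t ∈ Finset.Icc 1 T, ℓ i t ∈ Set.Icc (0:ℝ) 1)
    (w : Fin N → ℕ → ℝ) (hw1 : ∀ i, w i 1 = 1)
    (hrec : ∀ i, ∀ t ∈ Finset.Icc 1 T, w i (t + 1) = w i t * (1 - α * ℓ i t))
    (k : Fin N) :
    ∑ t ∈ Finset.Icc 1 T, (∑ i, w i t * ℓ i t) / (∑ i, w i t) -
      ∑ t ∈ Finset.Icc 1 T, ℓ k t ≤
      3 * Real.sqrt (T * Real.log N / 2) := by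
  have hT₀ : (0 : ℝ) < T := by exact_mod_cast hT
  have hlogN : 0 < log N := log_pos (by exact_mod_cast hN)
  have hα₀ : 0 < α := hαdef ▸ mul_pos (by norm_num) (sqrt_pos.2 (by positivity))
  calc _ ≤ log (Fintype.card (Fin N)) / α + α * T :=
        regret_le_log_card_div_add hα₀ hα2.le hℓ hw1 hrec k
    _ ≤ 3 * √(T * log N / 2) := by
        rw [Fintype.card_fin]
        exact div_add_mul_le_of_step_eq hlogN hT₀ hαdef
end

section
/- Let N ≥ 2, T ≥ 1 with α = (2/3)·√(2 ln N / T) < 1/2. For each t ∈ {1,...,T} and i ∈ {1,...,N}, let q_{i,t} ∈ [0,1] and p_t ∈ {0,1}. Define w_i^1 = 1 and w_i^{t+1} = w_i^t·(1 - α·(q_{i,t} - p_t)²). Then Σ_{t=1}^T ( Σ_i w_i^t·q_{i,t} / Σ_i w_i^t - p_t )² - min_{k ∈ {1,...,N}} Σ_{t=1}^T (q_{k,t} - p_t)² ≤ 3·√(T·ln N / 2). -/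
open Finset Real

/-!
Jensen's inequality for `y ↦ (y - p_t)²` bounds the aggregate's squared error in round `t` by
the weighted average `ℓ̄_t` of the labelers' losses `ℓ_{i,t} = (q_{i,t} - p_t)²`, so it suffices to
bound `∑ ℓ̄_t`. Each round multiplies the total weight `W_t` by `1 - α ℓ̄_t ≤ exp (-α ℓ̄_t)`, so
`W_{T+1} ≤ N exp (-α ∑ ℓ̄_t)`; on the other hand `W_{T+1} ≥ w_k^{T+1} ≥ exp (-α L_k - α² T)` by
`1 - x ≥ exp (-x - x²)` on `[0, 1/2]`. Taking logarithms, `∑ ℓ̄_t ≤ L_k + α T + ln N / α`, and the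
choice of `α` makes `α T + ln N / α = (17/6) √(T ln N / 2)`.
-/

lemma sq_centerMass_sub_le {ι : Type*} (s : Finset ι) {w x : ι → ℝ} (c : ℝ)
    (hw : ∀ i ∈ s, 0 ≤ w i) (hW : 0 < ∑ i ∈ s, w i) :
    (s.centerMass w x - c) ^ 2 ≤ s.centerMass w fun i => (x i - c) ^ 2 := by
  have hconv : ConvexOn ℝ Set.univ fun y : ℝ => (y - c) ^ 2 := by
    simpa [Function.comp_def, sub_eq_neg_add, add_comm] using
      (even_two.convexOn_pow (𝕜 := ℝ)).translate_right (-c)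
  exact hconv.map_centerMass_le hw hW fun _ _ => Set.mem_univ _

lemma Real.exp_neg_sub_sq_le_one_sub {x : ℝ} (h0 : 0 ≤ x) (h1 : x ≤ 1 / 2) :
    exp (-x - x ^ 2) ≤ 1 - x := by
  -- with `exp y ≥ 1 + y + y²/2` at `y = x + x²` this reduces to `x + x² + x³ ≤ 1`
  have hquad := quadratic_le_exp_of_nonneg (add_nonneg h0 (sq_nonneg x))
  rw [show -x - x ^ 2 = -(x + x ^ 2) by ring, exp_neg, inv_le_iff_one_le_mul₀ (exp_pos _)]
  nlinarith [mul_nonneg h0 (sq_nonneg x), mul_nonneg (mul_nonneg h0 h0) (sq_nonneg x),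
    mul_nonneg (sub_nonneg.2 h1) (sq_nonneg x)]

namespace MultiplicativeWeights

variable {ι : Type*} {α : ℝ} {ℓ w : ι → ℕ → ℝ} {T : ℕ}

lemma weight_succ_eq_prod (hw1 : ∀ i, w i 1 = 1)
    (hrec : ∀ i, ∀ t ∈ Icc 1 T, w i (t + 1) = w i t * (1 - α * ℓ i t))
    (i : ι) {t : ℕ} (ht : t ≤ T) :
    w i (t + 1) = ∏ s ∈ Icc 1 t, (1 - α * ℓ i s) := by
  induction t with
  | zero => simp [hw1]
  | succ t ih =>
    rw [hrec i (t + 1) (mem_Icc.2 ⟨by omega, ht⟩), ih (by omega),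
      prod_Icc_succ_top (by omega)]

lemma exp_neg_sub_sq_le_one_sub_mul (hα0 : 0 ≤ α) (hα : α ≤ 1 / 2) {x : ℝ}
    (hx : x ∈ Set.Icc (0 : ℝ) 1) : exp (-(α * x) - α ^ 2) ≤ 1 - α * x := by
  obtain ⟨hx0, hx1⟩ := hx
  have hαx : α * x ≤ α := mul_le_of_le_one_right hα0 hx1
  calc exp (-(α * x) - α ^ 2) ≤ exp (-(α * x) - (α * x) ^ 2) := by gcongr
    _ ≤ 1 - α * x := exp_neg_sub_sq_le_one_sub (mul_nonneg hα0 hx0) (hαx.trans hα)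

lemma weight_pos (hα0 : 0 ≤ α) (hα : α ≤ 1 / 2)
    (hℓ : ∀ i, ∀ t ∈ Icc 1 T, ℓ i t ∈ Set.Icc (0 : ℝ) 1) (hw1 : ∀ i, w i 1 = 1)
    (hrec : ∀ i, ∀ t ∈ Icc 1 T, w i (t + 1) = w i t * (1 - α * ℓ i t))
    (i : ι) {t : ℕ} (ht1 : 1 ≤ t) (ht : t ≤ T + 1) : 0 < w i t := by
  obtain ⟨t, rfl⟩ := Nat.exists_eq_add_of_le' ht1
  rw [weight_succ_eq_prod hw1 hrec i (by omega)]
  exact prod_pos fun s hs => (exp_pos _).trans_le <|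
    exp_neg_sub_sq_le_one_sub_mul hα0 hα (hℓ i s (Icc_subset_Icc_right (by omega) hs))

lemma exp_le_weight (hα0 : 0 ≤ α) (hα : α ≤ 1 / 2)
    (hℓ : ∀ i, ∀ t ∈ Icc 1 T, ℓ i t ∈ Set.Icc (0 : ℝ) 1) (hw1 : ∀ i, w i 1 = 1)
    (hrec : ∀ i, ∀ t ∈ Icc 1 T, w i (t + 1) = w i t * (1 - α * ℓ i t)) (k : ι) :
    exp (-(α * ∑ t ∈ Icc 1 T, ℓ k t) - α ^ 2 * T) ≤ w k (T + 1) := by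
  have hsum : -(α * ∑ t ∈ Icc 1 T, ℓ k t) - α ^ 2 * T =
      ∑ t ∈ Icc 1 T, (-(α * ℓ k t) - α ^ 2) := by
    simp [sum_sub_distrib, mul_sum, mul_comm]
  rw [weight_succ_eq_prod hw1 hrec k le_rfl, hsum, exp_sum]
  exact prod_le_prod (fun _ _ => (exp_pos _).le)
    fun t ht => exp_neg_sub_sq_le_one_sub_mul hα0 hα (hℓ k t ht)

lemma sum_weight_succ [Fintype ι]
    (hrec : ∀ i, ∀ t ∈ Icc 1 T, w i (t + 1) = w i t * (1 - α * ℓ i t))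
    {t : ℕ} (ht : t ∈ Icc 1 T) (hW : ∑ i, w i t ≠ 0) :
    ∑ i, w i (t + 1) = (∑ i, w i t) * (1 - α * univ.centerMass (w · t) (ℓ · t)) := by
  simp only [centerMass, smul_eq_mul, hrec _ t ht]
  field_simp
  simp only [mul_sub, mul_one, sum_sub_distrib, mul_sum]
  congr 1
  exact sum_congr rfl fun i _ => by ring

lemma sum_weight_le_card_mul_exp [Fintype ι] [Nonempty ι] (hα0 : 0 ≤ α) (hα : α ≤ 1 / 2)
    (hℓ : ∀ i, ∀ t ∈ Icc 1 T, ℓ i t ∈ Set.Icc (0 : ℝ) 1) (hw1 : ∀ i, w i 1 = 1)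
    (hrec : ∀ i, ∀ t ∈ Icc 1 T, w i (t + 1) = w i t * (1 - α * ℓ i t)) {t : ℕ} (ht : t ≤ T) :
    ∑ i, w i (t + 1) ≤
      Fintype.card ι * exp (-(α * ∑ s ∈ Icc 1 t, univ.centerMass (w · s) (ℓ · s))) := by
  induction t with
  | zero => simp [hw1]
  | succ t ih =>
    have ht' : t + 1 ∈ Icc 1 T := mem_Icc.2 ⟨by omega, ht⟩
    have hW : 0 < ∑ i, w i (t + 1) :=
      sum_pos (fun i _ => weight_pos hα0 hα hℓ hw1 hrec i (by omega) (by omega)) univ_nonempty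
    set m := univ.centerMass (w · (t + 1)) (ℓ · (t + 1))
    calc ∑ i, w i (t + 1 + 1) = (∑ i, w i (t + 1)) * (1 - α * m) :=
          sum_weight_succ hrec ht' hW.ne'
      _ ≤ (∑ i, w i (t + 1)) * exp (-(α * m)) := by
          gcongr; linarith [add_one_le_exp (-(α * m))]
      _ ≤ Fintype.card ι * exp (-(α * ∑ s ∈ Icc 1 t, univ.centerMass (w · s) (ℓ · s))) *
            exp (-(α * m)) := by gcongr; exact ih (by omega)
      _ = _ := by
          rw [mul_assoc, ← exp_add, sum_Icc_succ_top (by omega), mul_add, neg_add]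

theorem sum_centerMass_le_add [Fintype ι] [Nonempty ι] (hα0 : 0 < α) (hα : α ≤ 1 / 2)
    (hℓ : ∀ i, ∀ t ∈ Icc 1 T, ℓ i t ∈ Set.Icc (0 : ℝ) 1) (hw1 : ∀ i, w i 1 = 1)
    (hrec : ∀ i, ∀ t ∈ Icc 1 T, w i (t + 1) = w i t * (1 - α * ℓ i t)) (k : ι) :
    ∑ t ∈ Icc 1 T, univ.centerMass (w · t) (ℓ · t) ≤
      ∑ t ∈ Icc 1 T, ℓ k t + α * T + log (Fintype.card ι) / α := by
  set S := ∑ t ∈ Icc 1 T, univ.centerMass (w · t) (ℓ · t)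
  have hcard : (0 : ℝ) < Fintype.card ι := by exact_mod_cast Fintype.card_pos
  have hexp : exp (-(α * ∑ t ∈ Icc 1 T, ℓ k t) - α ^ 2 * T) ≤
      exp (log (Fintype.card ι) + -(α * S)) :=
    calc _ ≤ w k (T + 1) := exp_le_weight hα0.le hα hℓ hw1 hrec k
      _ ≤ ∑ i, w i (T + 1) := single_le_sum
          (fun i _ => (weight_pos hα0.le hα hℓ hw1 hrec i (by omega) le_rfl).le) (mem_univ k)
      _ ≤ Fintype.card ι * exp (-(α * S)) :=
          sum_weight_le_card_mul_exp hα0.le hα hℓ hw1 hrec le_rfl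
      _ = _ := by rw [exp_add, exp_log hcard]
  have hlog := exp_le_exp.1 hexp
  rw [← sub_le_iff_le_add', le_div_iff₀ hα0]
  linear_combination hlog

end MultiplicativeWeights

lemma mul_add_div_le_of_eq_sqrt {L T α : ℝ} (hL : 0 < L) (hT : 0 < T)
    (hα : α = 2 / 3 * √(2 * L / T)) : α * T + L / α ≤ 3 * √(T * L / 2) := by
  set x := √(T * L / 2)
  have hx : 0 < x := sqrt_pos.2 (by positivity)
  have hx2 : x ^ 2 = T * L / 2 := sq_sqrt (by positivity)
  have hαx : α = 2 / 3 * L / x := by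
    rw [hα, eq_div_iff hx.ne', mul_assoc, ← sqrt_mul (by positivity),
      show 2 * L / T * (T * L / 2) = L ^ 2 by field_simp, sqrt_sq hL.le]
  rw [hαx]
  field_simp
  nlinarith

lemma sq_sub_mem_Icc {a b : ℝ} (ha : a ∈ Set.Icc (0 : ℝ) 1) (hb : b ∈ Set.Icc (0 : ℝ) 1) :
    (a - b) ^ 2 ∈ Set.Icc (0 : ℝ) 1 := by
  obtain ⟨ha0, ha1⟩ := ha
  obtain ⟨hb0, hb1⟩ := hb
  exact ⟨sq_nonneg _, by nlinarith⟩

open MultiplicativeWeights in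
theorem main_regret_theorem (N T : ℕ) (hN : 2 ≤ N) (hT : 1 ≤ T)
    (α : ℝ) (hαdef : α = (2/3) * Real.sqrt (2 * Real.log N / T)) (hα2 : α < 1/2)
    (q : Fin N → ℕ → ℝ) (hq : ∀ i, ∀ t ∈ Finset.Icc 1 T, q i t ∈ Set.Icc (0:ℝ) 1)
    (p : ℕ → ℝ) (hp : ∀ t ∈ Finset.Icc 1 T, p t = 0 ∨ p t = 1)
    (w : Fin N → ℕ → ℝ) (hw1 : ∀ i, w i 1 = 1)
    (hrec : ∀ i, ∀ t ∈ Finset.Icc 1 T,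
      w i (t + 1) = w i t * (1 - α * (q i t - p t)^2)) :
    ∑ t ∈ Finset.Icc 1 T, ((∑ i, w i t * q i t) / (∑ i, w i t) - p t)^2 -
      (⨅ k : Fin N, ∑ t ∈ Finset.Icc 1 T, (q k t - p t)^2) ≤
      3 * Real.sqrt (T * Real.log N / 2) := by
  have : Nonempty (Fin N) := ⟨⟨0, by omega⟩⟩
  have hL : 0 < log N := log_pos (by exact_mod_cast hN)
  have hT0 : (0 : ℝ) < T := by exact_mod_cast hT
  have hα0 : 0 < α := hαdef ▸ by positivity
  have hℓ : ∀ i, ∀ t ∈ Icc 1 T, (q i t - p t) ^ 2 ∈ Set.Icc (0 : ℝ) 1 := fun i t ht =>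
    sq_sub_mem_Icc (hq i t ht) (by rcases hp t ht with h | h <;> simp [h])
  have hmean : ∀ t ∈ Icc 1 T, ((∑ i, w i t * q i t) / (∑ i, w i t) - p t) ^ 2 ≤
      univ.centerMass (w · t) fun i => (q i t - p t) ^ 2 := by
    intro t ht
    have hw : ∀ i, 0 < w i t := fun i =>
      weight_pos hα0.le hα2.le hℓ hw1 hrec i (mem_Icc.1 ht).1 (by have := (mem_Icc.1 ht).2; omega)
    have h := sq_centerMass_sub_le univ (x := (q · t)) (p t) (fun i _ => (hw i).le)
      (sum_pos (fun i _ => hw i) univ_nonempty)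
    simpa only [centerMass, smul_eq_mul, inv_mul_eq_div] using h
  obtain ⟨k, hk⟩ := exists_eq_ciInf_of_finite (f := fun k => ∑ t ∈ Icc 1 T, (q k t - p t) ^ 2)
  have hmw := sum_centerMass_le_add hα0 hα2.le hℓ hw1 hrec k
  rw [Fintype.card_fin] at hmw
  calc _ ≤ ∑ t ∈ Icc 1 T, (univ.centerMass (w · t) fun i => (q i t - p t) ^ 2) -
        ∑ t ∈ Icc 1 T, (q k t - p t) ^ 2 := by
        rw [← hk]; gcongr with t ht; exact hmean t ht
    _ ≤ α * T + log N / α := by linarith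
    _ ≤ 3 * √(T * log N / 2) := mul_add_div_le_of_eq_sqrt hL hT0 hαdef
end
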